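/- Let x : V → ℝ^d, w : V → V → ℝ, and A : V → V → ℝ with A(i,i) = 0 for all i, and suppose x(l) ≠ x(i) whenever w(i,l)·A(i,l) ≠ 0, and that M_i(x) = Σ_{l ∈ V} ((x(l) − x(i))/‖x(l) − x(i)‖) ⊗ ((x(l) − x(i))/‖x(l) − x(i)‖) · w(i,l) · A(i,l) is invertible for every i. Define D(x)(i,j) = M_i(x)⁻¹ · ((x(j) − x(i))/‖x(j) − x(i)‖²) · w(i,j) · A(i,j), and define D̃(x)(i,j) = D(x)(i,j) − (if i = j then Σ_{l ∈ V} D(x)(i,l) else 0). Then D̃ is translation invariant and orthogonal-transformation equivariant: for every t ∈ ℝ^d and orthogonal d×d matrix U and all i,j ∈ V, D̃(fun v => U·x(v) + t)(i,j) = U · D̃(x)(i,j). -/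

import Mathlib

open Matrix

/-- Matrix–vector product, viewed as acting on Euclidean space. -/
def matVec {d : ℕ} (U : Matrix (Fin d) (Fin d) ℝ) (v : EuclideanSpace ℝ (Fin d)) :
    EuclideanSpace ℝ (Fin d) := WithLp.toLp 2 (U.mulVec v)

/-- Outer product of two vectors: the matrix with entries `v k * w m`. -/
def outer {d : ℕ} (v w : EuclideanSpace ℝ (Fin d)) : Matrix (Fin d) (Fin d) ℝ :=
  Matrix.of fun k m => v k * w m

/-- The matrix `M_i(x) = Σ_l ((x l − x i)/‖x l − x i‖) ⊗ ((x l − x i)/‖x l − x i‖) ⬝ w(i,l) ⬝ A(i,l)`. -/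
noncomputable def Mmat {V : Type*} [Fintype V] {d : ℕ}
    (w A : V → V → ℝ) (x : V → EuclideanSpace ℝ (Fin d)) (i : V) :
    Matrix (Fin d) (Fin d) ℝ :=
  ∑ l : V, (w i l * A i l) •
    outer (‖x l - x i‖⁻¹ • (x l - x i)) (‖x l - x i‖⁻¹ • (x l - x i))

/-- The IsoAM `D(x)(i,j) = M_i(x)⁻¹ ⬝ ((x j − x i)/‖x j − x i‖²) ⬝ w(i,j) ⬝ A(i,j)`. -/
noncomputable def Dvec {V : Type*} [Fintype V] {d : ℕ}
    (w A : V → V → ℝ) (x : V → EuclideanSpace ℝ (Fin d)) (i j : V) :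
    EuclideanSpace ℝ (Fin d) :=
  (w i j * A i j / ‖x j - x i‖ ^ 2) • matVec (Mmat w A x i)⁻¹ (x j - x i)

/-- The IsoAM `D̃(x)(i,j) = D(x)(i,j) − (if i = j then Σ_l D(x)(i,l) else 0)`. -/
noncomputable def Dtilde {V : Type*} [Fintype V] [DecidableEq V] {d : ℕ}
    (w A : V → V → ℝ) (x : V → EuclideanSpace ℝ (Fin d)) (i j : V) :
    EuclideanSpace ℝ (Fin d) :=
  Dvec w A x i j - (if i = j then ∑ l : V, Dvec w A x i l else 0)

/-! A rigid motion `v ↦ U v + t` rotates every displacement `x l - x i` by `U` and keeps its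
length, so `M_i` is conjugated by `U`, hence so is `M_i⁻¹`, and then `D` and `D̃` are rotated
by `U`. -/

lemma Matrix.orthogonalGroup.mul_mul_transpose_inv {n R : Type*} [Fintype n] [DecidableEq n]
    [CommRing R] (U : Matrix.orthogonalGroup n R) (M : Matrix n n R) :
    ((U : Matrix n n R) * M * (U : Matrix n n R)ᵀ)⁻¹ = U * M⁻¹ * (U : Matrix n n R)ᵀ := by
  rw [Matrix.mul_inv_rev, Matrix.mul_inv_rev,
    inv_eq_left_inv ((mem_orthogonalGroup_iff n R).mp U.2),
    inv_eq_left_inv ((mem_orthogonalGroup_iff' n R).mp U.2), Matrix.mul_assoc]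

section matVec

variable {d : ℕ}

/- `matVec U` is definitionally `Matrix.toEuclideanCLM U`, which supplies linearity and,
for orthogonal `U`, preservation of the norm. -/

lemma matVec_zero (U : Matrix (Fin d) (Fin d) ℝ) : matVec U 0 = 0 :=
  map_zero (Matrix.toEuclideanCLM (𝕜 := ℝ) U)

lemma matVec_smul (U : Matrix (Fin d) (Fin d) ℝ) (c : ℝ) (v : EuclideanSpace ℝ (Fin d)) :
    matVec U (c • v) = c • matVec U v :=
  map_smul (Matrix.toEuclideanCLM (𝕜 := ℝ) U) c v

lemma matVec_sub (U : Matrix (Fin d) (Fin d) ℝ) (v v' : EuclideanSpace ℝ (Fin d)) :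
    matVec U (v - v') = matVec U v - matVec U v' :=
  map_sub (Matrix.toEuclideanCLM (𝕜 := ℝ) U) v v'

lemma matVec_sum {ι : Type*} (s : Finset ι) (U : Matrix (Fin d) (Fin d) ℝ)
    (f : ι → EuclideanSpace ℝ (Fin d)) :
    matVec U (∑ l ∈ s, f l) = ∑ l ∈ s, matVec U (f l) :=
  map_sum (Matrix.toEuclideanCLM (𝕜 := ℝ) U) f s

lemma norm_matVec (U : Matrix.orthogonalGroup (Fin d) ℝ) (v : EuclideanSpace ℝ (Fin d)) :
    ‖matVec (U : Matrix (Fin d) (Fin d) ℝ) v‖ = ‖v‖ :=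
  ContinuousLinearMap.norm_map_of_mem_unitary
    (Unitary.map_mem (Matrix.toEuclideanCLM (n := Fin d) (𝕜 := ℝ)) U.2) v

lemma matVec_mul (U U' : Matrix (Fin d) (Fin d) ℝ) (v : EuclideanSpace ℝ (Fin d)) :
    matVec (U * U') v = matVec U (matVec U' v) := by
  simp [matVec, Matrix.mulVec_mulVec]

lemma matVec_transpose_matVec (U : Matrix.orthogonalGroup (Fin d) ℝ)
    (v : EuclideanSpace ℝ (Fin d)) :
    matVec (U : Matrix (Fin d) (Fin d) ℝ)ᵀ (matVec U v) = v := by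
  rw [← matVec_mul, (Matrix.mem_orthogonalGroup_iff' (Fin d) ℝ).mp U.2]
  simp [matVec]

lemma outer_matVec (U : Matrix (Fin d) (Fin d) ℝ) (a b : EuclideanSpace ℝ (Fin d)) :
    outer (matVec U a) (matVec U b) = U * outer a b * Uᵀ := by
  change vecMulVec (U *ᵥ a) (U *ᵥ b) = U * vecMulVec a b * Uᵀ
  rw [mul_vecMulVec, vecMulVec_mul, vecMul_transpose]

end matVec

section RotatedDisplacements

variable {V : Type*} [Fintype V] {d : ℕ} (w A : V → V → ℝ)
  {x y : V → EuclideanSpace ℝ (Fin d)} {U : Matrix.orthogonalGroup (Fin d) ℝ}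

lemma Mmat_of_sub_eq_matVec (h : ∀ a b, y a - y b = matVec U (x a - x b)) (i : V) :
    Mmat w A y i = U * Mmat w A x i * (U : Matrix (Fin d) (Fin d) ℝ)ᵀ := by
  simp only [Mmat, Matrix.mul_sum, Matrix.sum_mul, h, norm_matVec, ← matVec_smul, outer_matVec,
    Matrix.mul_smul, Matrix.smul_mul]

lemma Dvec_of_sub_eq_matVec (h : ∀ a b, y a - y b = matVec U (x a - x b)) (i j : V) :
    Dvec w A y i j = matVec U (Dvec w A x i j) := by
  rw [Dvec, Dvec, h, norm_matVec, Mmat_of_sub_eq_matVec w A h,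
    Matrix.orthogonalGroup.mul_mul_transpose_inv, matVec_mul, matVec_mul,
    matVec_transpose_matVec, matVec_smul]

lemma Dtilde_of_sub_eq_matVec [DecidableEq V] (h : ∀ a b, y a - y b = matVec U (x a - x b))
    (i j : V) : Dtilde w A y i j = matVec U (Dtilde w A x i j) := by
  simp only [Dtilde, Dvec_of_sub_eq_matVec w A h, matVec_sub,
    apply_ite (matVec (U : Matrix (Fin d) (Fin d) ℝ)), matVec_sum, matVec_zero]

end RotatedDisplacements

theorem Dtilde_isometric_equivariant_general
    {V : Type*} [Fintype V] [DecidableEq V] {d : ℕ}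
    (x : V → EuclideanSpace ℝ (Fin d))
    (w A : V → V → ℝ)
    (U : Matrix.orthogonalGroup (Fin d) ℝ) (t : EuclideanSpace ℝ (Fin d)) (i j : V) :
    Dtilde w A (fun v => matVec (U : Matrix (Fin d) (Fin d) ℝ) (x v) + t) i j
      = matVec (U : Matrix (Fin d) (Fin d) ℝ) (Dtilde w A x i j) :=
  Dtilde_of_sub_eq_matVec w A (fun a b => by rw [add_sub_add_right_eq_sub, matVec_sub]) i j

/-- The IsoAM `D̃` is translation invariant and orthogonal-transformation
equivariant: `D̃(U∘x + t)(i,j) = U ⬝ D̃(x)(i,j)`. -/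
theorem Dtilde_isometric_equivariant
    {V : Type*} [Fintype V] [DecidableEq V] {d : ℕ}
    (x : V → EuclideanSpace ℝ (Fin d))
    (w A : V → V → ℝ)
    (hA : ∀ i, A i i = 0)
    (hne : ∀ i l, w i l * A i l ≠ 0 → x l ≠ x i)
    (hInv : ∀ i, IsUnit (Mmat w A x i))
    (U : Matrix.orthogonalGroup (Fin d) ℝ) (t : EuclideanSpace ℝ (Fin d)) (i j : V) :
    Dtilde w A (fun v => matVec (U : Matrix (Fin d) (Fin d) ℝ) (x v) + t) i j
      = matVec (U : Matrix (Fin d) (Fin d) ℝ) (Dtilde w A x i j) :=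
  Dtilde_isometric_equivariant_general x w A U t i j
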